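/- With s(d,m) ∈ ℤ[q] the generating polynomial of basal billiard partitions with d parts and largest part m, for all d ≥ 2 and n ≥ 2 one has s(d, 2n) = q^{2n}·s(d−1, 2(n−1)) + q^{4n−1}·s(d−2, 2(n−1)). -/

import Mathlib

/-- An Euclidean billiard partition, recorded as the strictly decreasing list
of its parts: a nonempty strictly decreasing list of positive integers whose
smallest (last) part is even and in which no two adjacent parts are both odd. -/
def IsEBP (l : List ℕ) : Prop :=
  l ≠ [] ∧ l.Chain' (fun a b => b < a) ∧ (∀ x ∈ l, 0 < x) ∧
    (∀ m ∈ l.getLast?, Even m) ∧ l.Chain' (fun a b => ¬(Odd a ∧ Odd b))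

/-- A basal billiard partition: an Euclidean billiard partition whose smallest
part equals `2` and in which adjacent parts differ by at most `2`. -/
def IsBasal (l : List ℕ) : Prop :=
  IsEBP l ∧ l.getLast? = some 2 ∧ l.Chain' (fun a b => a - b ≤ 2)

open Classical Polynomial in
/-- `s d m ∈ ℤ[q]` is the generating polynomial `∑_π q^{|π|}` of basal billiard
partitions `π` with exactly `d` parts and largest part `m` (such a partition has
all parts `≤ m`, hence is encoded as a function `Fin d → Fin (m+1)`, and each
basal billiard partition with `d` parts and largest part `m` occurs exactly once
in the sum below); in particular `s 0 m = 0`. -/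
noncomputable def s (d m : ℕ) : Polynomial ℤ :=
  ∑ f : Fin d → Fin (m + 1),
    if IsBasal (List.ofFn fun i => (f i : ℕ)) ∧
        (List.ofFn fun i => (f i : ℕ)).head? = some m
    then X ^ (List.ofFn fun i => (f i : ℕ)).sum
    else 0

/-!
In a basal partition with largest part `2n ≥ 4` the second part is `2n - 2` or `2n - 1`, and a
part `2n - 1`, being odd, must be followed by `2n - 2`. Deleting the leading part, respectively
the two leading parts, gives the two terms of the recursion.

`s d m` sums over lists with entries bounded by `m`; `boundedListGF d M` decouples the bound `M`
from the head, and any `M ≥ m` gives back `s d m`, so the partitions of all three terms can be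
indexed by one and the same type.
-/

open Polynomial

section BoundedListGF

open Classical in
noncomputable def boundedListGF (d M : ℕ) (P : List ℕ → Prop) : ℤ[X] :=
  ∑ f : Fin d → Fin (M + 1),
    if P (List.ofFn fun i => (f i : ℕ)) then X ^ (List.ofFn fun i => (f i : ℕ)).sum else 0

variable {d M : ℕ}

theorem boundedListGF_congr {P Q : List ℕ → Prop} (h : ∀ l, P l ↔ Q l) :
    boundedListGF d M P = boundedListGF d M Q := by
  rw [funext fun l => propext (h l)]

theorem boundedListGF_or {P Q : List ℕ → Prop} (h : ∀ l, P l → ¬Q l) :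
    boundedListGF d M (fun l => P l ∨ Q l) = boundedListGF d M P + boundedListGF d M Q := by
  simp only [boundedListGF, ← Finset.sum_add_distrib]
  refine Finset.sum_congr rfl fun f _ => ?_
  split_ifs <;> simp_all

theorem boundedListGF_succ_of_head {v : ℕ} (hv : v ≤ M) (P : List ℕ → Prop) :
    boundedListGF (d + 1) M (fun l => P l ∧ l.head? = some v) =
      X ^ v * boundedListGF d M (fun l => P (v :: l)) := by
  rw [boundedListGF, ← (Fin.consEquiv fun _ => Fin (M + 1)).sum_comp, Fintype.sum_prod_type,
    Finset.sum_eq_single (⟨v, by omega⟩ : Fin (M + 1)), boundedListGF, Finset.mul_sum]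
  · refine Finset.sum_congr rfl fun g _ => ?_
    simp only [Fin.consEquiv_apply, List.ofFn_succ, Fin.cons_zero, Fin.cons_succ,
      List.head?_cons, List.sum_cons, pow_add]
    split_ifs <;> simp_all
  · intro a _ ha
    refine Finset.sum_eq_zero fun g _ => if_neg ?_
    simp only [Fin.consEquiv_apply, List.ofFn_succ, Fin.cons_zero, List.head?_cons,
      Option.some.injEq, not_and]
    exact fun _ h => ha (Fin.ext h)
  · simp

theorem boundedListGF_eq_of_le {P : List ℕ → Prop} {m : ℕ} (hmM : m ≤ M)
    (hP : ∀ l, P l → ∀ x ∈ l, x ≤ m) :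
    boundedListGF d M P = boundedListGF d m P := by
  refine (Fintype.sum_of_injective (fun f i => Fin.castLE (by omega) (f i)) ?_ _ _ ?_ ?_).symm
  · exact fun f g h => funext fun i => Fin.castLE_injective _ (congrFun h i)
  · intro f hf
    refine if_neg fun hPf => hf ⟨fun i => ⟨f i, ?_⟩, funext fun i => Fin.ext rfl⟩
    have := hP _ hPf (f i) (List.mem_ofFn.mpr ⟨i, rfl⟩)
    omega
  · intro f
    rfl

end BoundedListGF


theorem IsBasal.le_of_head?_eq {l : List ℕ} {m x : ℕ} (hl : IsBasal l) (hm : l.head? = some m)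
    (hx : x ∈ l) : x ≤ m := by
  obtain ⟨⟨-, hchain, -⟩, -⟩ := hl
  cases l with
  | nil => simp at hm
  | cons a t =>
    obtain rfl : a = m := by simpa using hm
    rcases List.mem_cons.mp hx with rfl | hx
    · exact le_rfl
    · exact (List.rel_of_pairwise_cons (List.isChain_iff_pairwise.mp hchain) hx).le

theorem isBasal_cons_cons {a b : ℕ} {t : List ℕ} :
    IsBasal (a :: b :: t) ↔ IsBasal (b :: t) ∧ b < a ∧ a - b ≤ 2 ∧ ¬(Odd a ∧ Odd b) := by
  constructor
  · rintro ⟨⟨-, hlt, hpos, hlast, hodd⟩, htwo, hgap⟩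
    obtain ⟨hlt_ab, hlt⟩ := List.isChain_cons_cons.mp hlt
    obtain ⟨hodd_ab, hodd⟩ := List.isChain_cons_cons.mp hodd
    obtain ⟨hgap_ab, hgap⟩ := List.isChain_cons_cons.mp hgap
    exact ⟨⟨⟨List.cons_ne_nil _ _, hlt, fun x hx => hpos x (.tail _ hx), hlast, hodd⟩, htwo, hgap⟩,
      hlt_ab, hgap_ab, hodd_ab⟩
  · rintro ⟨⟨⟨-, hlt, hpos, hlast, hodd⟩, htwo, hgap⟩, hlt_ab, hgap_ab, hodd_ab⟩
    exact ⟨⟨List.cons_ne_nil _ _, List.isChain_cons_cons.mpr ⟨hlt_ab, hlt⟩,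
      List.forall_mem_cons.mpr ⟨by omega, hpos⟩, hlast, List.isChain_cons_cons.mpr ⟨hodd_ab, hodd⟩⟩,
      htwo, List.isChain_cons_cons.mpr ⟨hgap_ab, hgap⟩⟩

theorem not_isBasal_singleton {a : ℕ} (ha : a ≠ 2) : ¬IsBasal [a] :=
  fun h => ha (by simpa using h.2.1)

theorem isBasal_cons_of_even {a : ℕ} {l : List ℕ} (ha : Even a) (ha4 : 4 ≤ a) :
    IsBasal (a :: l) ↔
      IsBasal l ∧ l.head? = some (a - 2) ∨ IsBasal l ∧ l.head? = some (a - 1) := by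
  cases l with
  | nil => simpa using not_isBasal_singleton (by omega)
  | cons b t =>
    rw [isBasal_cons_cons, ← and_or_left]
    simp only [List.head?_cons, Option.some.injEq, Nat.odd_iff, Nat.even_iff] at ha ⊢
    constructor
    · rintro ⟨hb, hlt, hgap, -⟩
      exact ⟨hb, by omega⟩
    · rintro ⟨hb, h⟩
      exact ⟨hb, by omega, by omega, by omega⟩

theorem isBasal_cons_of_odd {a : ℕ} {l : List ℕ} (ha : Odd a) :
    IsBasal (a :: l) ↔ IsBasal l ∧ l.head? = some (a - 1) := by
  cases l with
  | nil =>
    simpa using not_isBasal_singleton (by rintro rfl; exact Nat.not_even_iff_odd.2 ha even_two)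
  | cons b t =>
    rw [isBasal_cons_cons]
    simp only [List.head?_cons, Option.some.injEq, Nat.odd_iff] at ha ⊢
    constructor
    · rintro ⟨hb, hlt, hgap, hodd⟩
      exact ⟨hb, by omega⟩
    · rintro ⟨hb, h⟩
      exact ⟨hb, by omega, by omega, by omega⟩

theorem s_eq_boundedListGF {d m M : ℕ} (hmM : m ≤ M) :
    s d m = boundedListGF d M (fun l => IsBasal l ∧ l.head? = some m) := by
  rw [boundedListGF_eq_of_le hmM fun _ hl _ hx => hl.1.le_of_head?_eq hl.2 hx, s, boundedListGF]
  congr!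

open Polynomial in
/-- For all `d ≥ 2` and `n ≥ 2`,
`s(d, 2n) = q^{2n}·s(d−1, 2(n−1)) + q^{4n−1}·s(d−2, 2(n−1))`. -/
theorem s_even_second_order_recursion :
    ∀ d n : ℕ, 2 ≤ d → 2 ≤ n →
      s d (2 * n) =
        X ^ (2 * n) * s (d - 1) (2 * (n - 1)) +
          X ^ (4 * n - 1) * s (d - 2) (2 * (n - 1)) := by
  intro d n hd hn
  obtain ⟨d, rfl⟩ : ∃ k, d = k + 2 := ⟨d - 2, by omega⟩
  have hle : 2 * (n - 1) ≤ 2 * n := by omega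
  have hodd : Odd (2 * n - 1) := ⟨n - 1, by omega⟩
  calc s (d + 2) (2 * n)
      = X ^ (2 * n) * boundedListGF (d + 1) (2 * n) (fun l => IsBasal (2 * n :: l)) := by
        rw [s_eq_boundedListGF le_rfl, boundedListGF_succ_of_head le_rfl]
    _ = X ^ (2 * n) * (s (d + 1) (2 * (n - 1)) +
          boundedListGF (d + 1) (2 * n) (fun l => IsBasal l ∧ l.head? = some (2 * n - 1))) := by
        rw [boundedListGF_congr fun _ => isBasal_cons_of_even (even_two_mul n) (by omega),
          boundedListGF_or fun _ _ _ => by simp_all only [Option.some.injEq]; omega,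
          show 2 * n - 2 = 2 * (n - 1) by omega, ← s_eq_boundedListGF hle]
    _ = X ^ (2 * n) * (s (d + 1) (2 * (n - 1)) + X ^ (2 * n - 1) * s d (2 * (n - 1))) := by
        rw [boundedListGF_succ_of_head (by omega), boundedListGF_congr fun _ =>
          isBasal_cons_of_odd hodd, show 2 * n - 1 - 1 = 2 * (n - 1) by omega,
          ← s_eq_boundedListGF hle]
    _ = _ := by
        rw [show 4 * n - 1 = 2 * n + (2 * n - 1) by omega, pow_add,
          show d + 2 - 1 = d + 1 by omega, Nat.add_sub_cancel]
        ring
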